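/- arXiv:0810.2127 — 3 statements merged into one kernel-verified Lean document; each statement's English description precedes it below -/
import Mathlib

section
/- Multivariate Exponential Formula: Let K be a field of characteristic 0 and f : ℕⁿ \ {0} → K. Define g : ℕⁿ → K by g(0,…,0) = 1 and, for disjoint finite sets V_1,…,V_n not all empty, g(|V_1|,…,|V_n|) = ∑_{π ∈ Π(V_1 ∪ ⋯ ∪ V_n)} ∏_{i=1}^{ℓ(π)} f(|π_i ∩ V_1|,…,|π_i ∩ V_n|), where the sum is over all set partitions π of the union with blocks π_1,…,π_{ℓ(π)}. Then in K[[X_1,…,X_n]], log(∑_{ℓ∈ℕⁿ} g(ℓ) X^ℓ/ℓ!) = ∑_{0≠ℓ∈ℕⁿ} f(ℓ) X^ℓ/ℓ!. -/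
/-!
Both sides are sums over colourings of `V = V₁ ⊔ ⋯ ⊔ Vₙ`. Expanding the `k`-th power of an EGF,
`ℓ! [X^ℓ] E_h^k` is the sum over all maps `c : V → {1, …, k}` of `∏ⱼ h(profile of c⁻¹(j))`,
since the number of colourings whose colour classes have prescribed profiles `l₁, …, l_k` is the
multinomial coefficient `ℓ! / (l₁! ⋯ l_k!)`. When `h(0) = 0` only surjective colourings contribute,
and these are the partitions of `V` into `k` blocks together with one of the `k!` labellings of
the blocks. Hence `∑ₖ [X^ℓ] E_f^k / k!` counts every partition of `V` exactly once, weighted by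
`∏_B f(profile of B) / ℓ!`, which is `g(ℓ) / ℓ!`.
-/

open Finset

/-- The multivariate EGF `E_h(X) = ∑_{ℓ∈ℕⁿ} h(ℓ) X^ℓ/ℓ!` of `h : ℕⁿ → K`. -/
noncomputable def mvEGF {n : ℕ} (K : Type*) [Field K] (h : (Fin n → ℕ) → K) :
    MvPowerSeries (Fin n) K :=
  fun m : Fin n →₀ ℕ => h m / ∏ i, ((m i).factorial : K)

/-- The multivariate EGF of `f` restricted to `ℕⁿ \ {0}` (the `ℓ = 0` term is dropped). -/
noncomputable def mvEGF₀ {n : ℕ} (K : Type*) [Field K] (f : (Fin n → ℕ) → K) :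
    MvPowerSeries (Fin n) K :=
  fun m : Fin n →₀ ℕ => if (m : Fin n → ℕ) = 0 then 0 else f m / ∏ i, ((m i).factorial : K)

theorem card_fun_fiber_card_eq_multinomial {ι : Type*} [Fintype ι] [DecidableEq ι] (N : ℕ)
    (t : ι → ℕ) (ht : ∑ j, t j = N) :
    #{c : Fin N → ι | ∀ j, #{a | c a = j} = t j} = Nat.multinomial univ t := by
  -- Read off the coefficient of `X^t` in `(∑ⱼ Xⱼ)^N = ∑_{c : Fin N → ι} ∏ₐ X_{c a}`.
  have hX (c : Fin N → ι) : ∏ a, (MvPolynomial.X (c a) : MvPolynomial ι ℕ)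
      = ∏ j, MvPolynomial.X j ^ #{a | c a = j} := by
    rw [← prod_fiberwise univ c]
    exact prod_congr rfl fun j _ => prod_eq_pow_card fun a ha => by rw [(mem_filter.1 ha).2]
  have hsum : (Finsupp.equivFunOnFinite.symm t).sum (fun _ e => e) = N := by
    rw [Finsupp.sum_fintype _ _ fun _ => rfl]; exact ht
  have key :=
    MvPolynomial.coeff_sum_X_pow_of_fintype (R := ℕ) (Finsupp.equivFunOnFinite.symm t) N
  rw [Fintype.sum_pow, MvPolynomial.coeff_sum, if_pos hsum,
    Finsupp.multinomial_eq_of_support_subset (subset_univ _)] at key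
  simp only [hX, MvPolynomial.coeff_prod_X_pow, sum_boole, Finsupp.ext_iff,
    Finsupp.indicator_of_mem (mem_univ _)] at key
  simpa [eq_comm] using key

section ColorProfile

variable {σ ι : Type*} [DecidableEq σ] {m : σ → ℕ}

/-- `colorProfile B i = |B ∩ Vᵢ|`, where `Vᵢ` is the fibre of `Σ i, Fin (m i)` over `i`. -/
def colorProfile (B : Finset (Σ i, Fin (m i))) : σ → ℕ := fun i => #{v ∈ B | v.1 = i}

lemma colorProfile_fiber [Fintype σ] [DecidableEq ι] (c : (Σ i, Fin (m i)) → ι) (j : ι)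
    (i : σ) :
    colorProfile {v | c v = j} i = #{a | c ⟨i, a⟩ = j} := by
  rw [colorProfile, filter_filter,
    ← card_map (Function.Embedding.sigmaMk (β := fun i => Fin (m i)) i)]
  congr 1
  ext ⟨i', a⟩
  simp only [mem_filter, mem_univ, true_and, mem_map, Function.Embedding.sigmaMk_apply]
  constructor
  · rintro ⟨h, rfl⟩; exact ⟨a, h, rfl⟩
  · rintro ⟨a, h, ⟨⟩⟩; exact ⟨h, rfl⟩

lemma sum_colorProfile_fiber [Fintype σ] [Fintype ι] [DecidableEq ι] (c : (Σ i, Fin (m i)) → ι)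
    (i : σ) :
    ∑ j, colorProfile {v | c v = j} i = m i := by
  simp only [colorProfile_fiber]
  rw [← card_eq_sum_card_fiberwise fun _ _ => mem_univ _, card_univ, Fintype.card_fin]

@[simp]
lemma colorProfile_empty : colorProfile (∅ : Finset (Σ i, Fin (m i))) = 0 := by
  ext i
  simp [colorProfile]

lemma colorProfile_ne_zero {B : Finset (Σ i, Fin (m i))} (hB : B.Nonempty) :
    colorProfile B ≠ 0 := by
  obtain ⟨v, hv⟩ := hB
  refine fun h => ?_
  have := congrFun h v.1
  simp only [colorProfile, Pi.zero_apply, card_eq_zero, filter_eq_empty_iff] at this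
  exact this hv rfl

theorem prod_factorial_mul_card_colorings_with_profile [Fintype σ] [Fintype ι] [DecidableEq ι]
    (l : ι → σ → ℕ) (hl : ∀ i, ∑ j, l j i = m i) :
    (∏ j, ∏ i, (l j i).factorial) *
        #{c : (Σ i, Fin (m i)) → ι | ∀ j, colorProfile {v | c v = j} = l j}
      = ∏ i, (m i).factorial := by
  have hcard : #{c : (Σ i, Fin (m i)) → ι | ∀ j, colorProfile {v | c v = j} = l j}
      = ∏ i, Nat.multinomial univ (fun j => l j i) := calc
    _ = #(Fintype.piFinset fun i => {e : Fin (m i) → ι | ∀ j, #{a | e a = j} = l j i}) := by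
      refine card_equiv (Equiv.piCurry fun _ _ => ι) fun c => ?_
      simp only [mem_filter, mem_univ, true_and, Fintype.mem_piFinset, funext_iff,
        colorProfile_fiber]
      exact forall_comm
    _ = _ := by
      rw [Fintype.card_piFinset]
      exact prod_congr rfl fun i _ => card_fun_fiber_card_eq_multinomial _ _ (hl i)
  rw [hcard, prod_comm, ← prod_mul_distrib]
  exact prod_congr rfl fun i _ => by rw [Nat.multinomial_spec, hl]

end ColorProfile

section Colorings

variable {α ι : Type*} [Fintype α] [DecidableEq α]

def Finpartition.ofSurjective [Fintype ι] [DecidableEq ι] (c : α → ι)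
    (hc : Function.Surjective c) :
    Finpartition (univ : Finset α) :=
  Finpartition.ofExistsUnique (univ.image fun j => ({a | c a = j} : Finset α))
    (fun _ _ => subset_univ _)
    (fun a _ => ⟨({b | c b = c a} : Finset α), by simp, by
      rintro _ ⟨hB, ha⟩
      obtain ⟨j, -, rfl⟩ := mem_image.1 hB
      simp_all⟩)
    (by
      rintro hj
      obtain ⟨j, -, hj⟩ := mem_image.1 hj
      obtain ⟨a, rfl⟩ := hc j
      simpa using hj.subset (mem_filter.2 ⟨mem_univ a, rfl⟩))

def Finpartition.coloring (π : Finpartition (univ : Finset α)) (e : ι ≃ π.parts) : α → ι :=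
  fun a => e.symm ⟨π.part a, π.part_mem.2 (mem_univ a)⟩

lemma Finpartition.coloring_eq_iff (π : Finpartition (univ : Finset α)) (e : ι ≃ π.parts)
    {a : α} {j : ι} : π.coloring e a = j ↔ a ∈ (e j : Finset α) := by
  simp [coloring, Equiv.symm_apply_eq, Subtype.ext_iff, π.part_eq_iff_mem (e j).2]

lemma Finpartition.filter_coloring_eq [DecidableEq ι] (π : Finpartition (univ : Finset α))
    (e : ι ≃ π.parts) (j : ι) :
    ({a | π.coloring e a = j} : Finset α) = e j := by
  ext a
  simp [π.coloring_eq_iff]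

lemma Finpartition.mem_parts_iff_exists_apply_eq (π : Finpartition (univ : Finset α))
    (e : ι ≃ π.parts) {B : Finset α} : B ∈ π.parts ↔ ∃ j, (e j : Finset α) = B :=
  ⟨fun hB => ⟨e.symm ⟨B, hB⟩, by simp⟩, by rintro ⟨j, rfl⟩; exact (e j).2⟩

theorem sum_surjective_eq_sum_finpartition_equiv [Fintype ι] [DecidableEq ι] {R : Type*}
    [AddCommMonoid R] (F : (α → ι) → R) :
    ∑ c : α → ι with Function.Surjective c, F c
      = ∑ x : Σ π : Finpartition (univ : Finset α), ι ≃ π.parts, F (x.1.coloring x.2) := by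
  refine (sum_bij (fun x _ => x.1.coloring x.2) (fun x _ => ?_) (fun x _ x' _ h => ?_)
    (fun c hc => ?_) (fun _ _ => rfl)).symm
  · obtain ⟨π, e⟩ := x
    refine mem_filter.2 ⟨mem_univ _, fun j => ?_⟩
    obtain ⟨a, ha⟩ := π.nonempty_of_mem_parts (e j).2
    exact ⟨a, π.coloring_eq_iff e |>.2 ha⟩
  · obtain ⟨π, e⟩ := x
    obtain ⟨π', e'⟩ := x'
    have hfib (j : ι) : (e j : Finset α) = e' j := by
      rw [← π.filter_coloring_eq, ← π'.filter_coloring_eq]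
      simp only [h]
    obtain rfl : π = π' := Finpartition.ext <| by
      ext B
      rw [π.mem_parts_iff_exists_apply_eq e, π'.mem_parts_iff_exists_apply_eq e']
      simp only [hfib]
    obtain rfl : e = e' := Equiv.ext fun j => Subtype.ext (hfib j)
    rfl
  · have hc := (mem_filter.1 hc).2
    let π := Finpartition.ofSurjective c hc
    let e : ι ≃ π.parts := Equiv.ofBijective
      (fun j => ⟨({a | c a = j} : Finset α), mem_image_of_mem _ (mem_univ j)⟩)
      ⟨fun j j' hj => ?_, ?_⟩
    · refine ⟨⟨π, e⟩, mem_univ _, funext fun a => (π.coloring_eq_iff e).2 ?_⟩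
      exact mem_filter.2 ⟨mem_univ a, rfl⟩
    · obtain ⟨a, rfl⟩ := hc j
      simpa using congrArg (fun B : π.parts => a ∈ (B : Finset α)) hj
    · rintro ⟨B, hB⟩
      obtain ⟨j, -, rfl⟩ := mem_image.1 hB
      exact ⟨j, rfl⟩

theorem sum_prod_fibers_eq_factorial_mul_sum_finpartition [Fintype ι] [DecidableEq ι]
    {R : Type*} [CommSemiring R] (w : Finset α → R) (hw : w ∅ = 0) :
    ∑ c : α → ι, ∏ j, w {a | c a = j}
      = (Fintype.card ι).factorial *
          ∑ π : Finpartition (univ : Finset α) with #π.parts = Fintype.card ι,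
            ∏ B ∈ π.parts, w B := by
  have hsurj : ∑ c : α → ι, ∏ j, w {a | c a = j}
      = ∑ c : α → ι with Function.Surjective c, ∏ j, w {a | c a = j} := by
    refine (sum_filter_of_ne fun c _ hc j => ?_).symm
    by_contra! hj
    exact hc (prod_eq_zero (mem_univ j) (by rw [filter_eq_empty_iff.2 fun a _ => hj a, hw]))
  rw [hsurj, sum_surjective_eq_sum_finpartition_equiv, Fintype.sum_sigma, mul_sum, sum_filter]
  refine sum_congr rfl fun π _ => ?_
  have hprod (e : ι ≃ π.parts) : ∏ j, w {a | π.coloring e a = j} = ∏ B ∈ π.parts, w B := by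
    simp only [π.filter_coloring_eq]
    rw [Equiv.prod_comp e (fun B : π.parts => w B), prod_coe_sort]
  simp only [hprod, sum_const, card_univ, nsmul_eq_mul]
  split_ifs with h
  · rw [Fintype.card_equiv (Fintype.equivOfCardEq (by simpa using h.symm))]
  · rw [Fintype.card_eq_zero_iff.2 ⟨fun e => h (by simpa using (Fintype.card_congr e).symm)⟩,
      Nat.cast_zero, zero_mul]

lemma sum_prod_finpartition_of_isEmpty [IsEmpty α] {R : Type*} [CommSemiring R]
    (w : Finset α → R) : ∑ π : Finpartition (univ : Finset α), ∏ B ∈ π.parts, w B = 1 := by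
  have hparts (π : Finpartition (univ : Finset α)) : π.parts = ∅ :=
    π.parts_eq_empty_iff.2 (univ_eq_empty.trans bot_eq_empty.symm)
  have : Subsingleton (Finpartition (univ : Finset α)) :=
    ⟨fun π π' => Finpartition.ext ((hparts π).trans (hparts π').symm)⟩
  rw [Fintype.sum_subsingleton _ ⊥, hparts, prod_empty]

end Colorings

section EGF

variable {n : ℕ} {K : Type*} [Field K]

lemma coeff_mvEGF (h : (Fin n → ℕ) → K) (m : Fin n →₀ ℕ) :
    MvPowerSeries.coeff m (mvEGF K h) = h m / ∏ i, ((m i).factorial : K) := rfl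

lemma mvEGF₀_eq_mvEGF (f : (Fin n → ℕ) → K) :
    mvEGF₀ K f = mvEGF K (fun p => if p = 0 then 0 else f p) := by
  ext m
  rw [coeff_mvEGF, ite_div, zero_div]
  rfl

theorem prod_factorial_mul_coeff_mvEGF_pow [CharZero K] (h : (Fin n → ℕ) → K)
    (m : Fin n →₀ ℕ) (k : ℕ) :
    (∏ i, ((m i).factorial : K)) * MvPowerSeries.coeff m (mvEGF K h ^ k)
      = ∑ c : (Σ i, Fin (m i)) → Fin k, ∏ j, h (colorProfile {v | c v = j}) := by
  let profile (c : (Σ i, Fin (m i)) → Fin k) : Fin k →₀ Fin n →₀ ℕ :=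
    Finsupp.equivFunOnFinite.symm fun j =>
      Finsupp.equivFunOnFinite.symm (colorProfile {v | c v = j})
  have hprofile (c) : profile c ∈ finsuppAntidiag univ m := by
    refine mem_finsuppAntidiag.2 ⟨Finsupp.ext fun i => ?_, subset_univ _⟩
    rw [Finsupp.finsetSum_apply]
    exact sum_colorProfile_fiber c i
  rw [← Fin.prod_const, MvPowerSeries.coeff_prod, mul_sum,
    ← sum_fiberwise_of_maps_to fun c _ => hprofile c]
  refine sum_congr rfl fun l hl => ?_
  have hprofile_eq (c) : profile c = l ↔ ∀ j, colorProfile {v | c v = j} = ⇑(l j) := by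
    simp only [profile, Finsupp.ext_iff, funext_iff, Finsupp.equivFunOnFinite_symm_apply_apply]
  have hcount : (∏ j, ∏ i, ((l j i).factorial : K)) * #{c | profile c = l}
      = ∏ i, ((m i).factorial : K) := by
    have := prod_factorial_mul_card_colorings_with_profile (m := ⇑m) (fun j => ⇑(l j))
      fun i => by rw [← (mem_finsuppAntidiag.1 hl).1, Finsupp.finsetSum_apply]
    simp only [← hprofile_eq] at this
    exact_mod_cast this
  have hne : (∏ j, ∏ i, ((l j i).factorial : K)) ≠ 0 := by
    simp [prod_ne_zero_iff, Nat.factorial_ne_zero]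
  rw [sum_congr rfl fun c hc => prod_congr rfl fun j _ =>
    congrArg h ((hprofile_eq c).1 (mem_filter.1 hc).2 j), sum_const, nsmul_eq_mul]
  simp only [coeff_mvEGF, prod_div_distrib]
  rw [← hcount, mul_right_comm, mul_div_cancel₀ _ hne, mul_comm]

theorem inv_factorial_mul_coeff_mvEGF_pow [CharZero K] (h : (Fin n → ℕ) → K) (h0 : h 0 = 0)
    (m : Fin n →₀ ℕ) (k : ℕ) :
    (k.factorial : K)⁻¹ * MvPowerSeries.coeff m (mvEGF K h ^ k)
      = (∏ i, ((m i).factorial : K))⁻¹ *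
          ∑ π : Finpartition (univ : Finset (Σ i, Fin (m i))) with #π.parts = k,
            ∏ B ∈ π.parts, h (colorProfile B) := by
  have hm : (∏ i, ((m i).factorial : K)) ≠ 0 := by simp [prod_ne_zero_iff, Nat.factorial_ne_zero]
  have hk : (k.factorial : K) ≠ 0 := by simp [Nat.factorial_ne_zero]
  have key := prod_factorial_mul_coeff_mvEGF_pow h m k
  rw [sum_prod_fibers_eq_factorial_mul_sum_finpartition (fun B => h (colorProfile B))
    (by rw [colorProfile_empty, h0]), Fintype.card_fin] at key
  field_simp
  linear_combination key

end EGF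

/-- **Multivariate Exponential Formula.**  Let `K` be a field of characteristic
zero and `f : ℕⁿ \ {0} → K`.  Define `g : ℕⁿ → K` by `g(0) = 1` and, for
disjoint finite sets `V₁, …, V_n` (realized as the fibres of
`Σ i, Fin (ℓ i)`) not all empty,
`g(|V₁|,…,|V_n|) = ∑_{π} ∏_{B ∈ π} f(|B ∩ V₁|, …, |B ∩ V_n|)`, the sum being
over all set partitions `π` of `V₁ ∪ ⋯ ∪ V_n`.  Then
`log E_g = E_f` in `K[[X₁,…,X_n]]`; equivalently (applying `exp`),
each coefficient of `E_g` equals the corresponding coefficient of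
`∑_k E_f^k / k!` (a finite sum in each degree). -/
theorem multivariate_exponential_formula {n : ℕ} (K : Type*) [Field K] [CharZero K]
    (f g : (Fin n → ℕ) → K)
    (hg0 : g 0 = 1)
    (hg : ∀ ℓ : Fin n → ℕ, ℓ ≠ 0 →
      g ℓ = ∑ π : Finpartition (Finset.univ : Finset (Σ i : Fin n, Fin (ℓ i))),
              ∏ B ∈ π.parts, f (fun i => (B.filter (fun v => v.1 = i)).card)) :
    ∀ m : Fin n →₀ ℕ,
      MvPowerSeries.coeff m (mvEGF K g) =
        ∑ k ∈ Finset.range (m.sum (fun _ e => e) + 1),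
          (k.factorial : K)⁻¹ * MvPowerSeries.coeff m (mvEGF₀ K f ^ k) := by
  intro m
  have hg' : g m = ∑ π : Finpartition (univ : Finset (Σ i, Fin (m i))),
      ∏ B ∈ π.parts, f (colorProfile B) := by
    by_cases hm : (m : Fin n → ℕ) = 0
    · have : IsEmpty (Σ i, Fin (m i)) := ⟨fun v => (congrFun hm v.1 ▸ v.2).elim0⟩
      rw [sum_prod_finpartition_of_isEmpty, hm, hg0]
    · exact hg m hm
  have hcard (π : Finpartition (univ : Finset (Σ i, Fin (m i)))) :
      #π.parts ∈ range (m.sum (fun _ e => e) + 1) := by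
    rw [mem_range, Nat.lt_succ_iff, Finsupp.sum_fintype _ _ fun _ => rfl]
    simpa using π.card_parts_le_card
  simp_rw [mvEGF₀_eq_mvEGF,
    inv_factorial_mul_coeff_mvEGF_pow (fun p => if p = 0 then 0 else f p) (if_pos rfl),
    ← mul_sum, sum_fiberwise_of_maps_to fun π _ => hcard π, coeff_mvEGF, hg', div_eq_inv_mul]
  congr 1
  refine sum_congr rfl fun π _ => prod_congr rfl fun B hB => ?_
  rw [if_neg (colorProfile_ne_zero (π.nonempty_of_mem_parts hB))]
end

section
/- Mahler-type expansion (single variable case): If f ∈ ℚ(q)[x] is a polynomial in x over ℚ(q) such that f(q^b) ∈ ℤ[q] for every nonnegative integer b, then there exist polynomials c_ℓ(q) ∈ ℤ[q], all but finitely many zero, with f(x) = ∑_{ℓ≥0} c_ℓ(q) ⟨x choose ℓ⟩_q, where ⟨x choose ℓ⟩_q := ∏_{i=1}^{ℓ} (x/q^{i-1} - 1)/(q^i - 1). -/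
/-!
Since `⟨x choose ℓ⟩_q` has degree `ℓ`, these polynomials form a basis of `ℚ(q)[x]`, so
`f = ∑ d_ℓ ⟨x choose ℓ⟩_q` with `d_ℓ ∈ ℚ(q)`. Evaluating at `x = q^b` gives
`f(q^b) = ∑_{ℓ ≤ b} d_ℓ [b choose ℓ]_q`: a unitriangular system whose entries lie in `ℤ[q]` by the
q-Pascal rule. Solving it for `d_b` by induction on `b` keeps every `d_b` in `ℤ[q]`.
-/

open Finset Polynomial

/-- The generalized q-binomial `⟨x choose ℓ⟩_q := ∏_{i=1}^{ℓ} (x/q^{i-1} - 1)/(q^i - 1)`,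
a polynomial in `x` over `ℚ(q)` (here `q` is `RatFunc.X`). -/
noncomputable def angleBinom (ℓ : ℕ) : Polynomial (RatFunc ℚ) :=
  ∏ i ∈ Finset.range ℓ,
    Polynomial.C (((RatFunc.X : RatFunc ℚ) ^ (i + 1) - 1)⁻¹) *
      (Polynomial.C (((RatFunc.X : RatFunc ℚ) ^ i)⁻¹) * Polynomial.X - 1)

/-- An element of `ℚ(q)` "is an integral polynomial in `q`". -/
def IsIntPoly (r : RatFunc ℚ) : Prop :=
  ∃ p : Polynomial ℤ, r = algebraMap (Polynomial ℚ) (RatFunc ℚ) (p.map (Int.castRingHom ℚ))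

theorem mem_of_unitriangular_sum_mem {R : Type*} [Ring R] (T : Subring R) {E : ℕ → ℕ → R}
    (hE_lt : ∀ b ℓ, b < ℓ → E b ℓ = 0) (hE_self : ∀ b, E b b = 1) (hE_mem : ∀ b ℓ, E b ℓ ∈ T)
    {d : ℕ → R} {N : ℕ} (hd : ∀ b < N, ∑ ℓ ∈ range N, d ℓ * E b ℓ ∈ T) :
    ∀ ℓ < N, d ℓ ∈ T := by
  intro b
  induction b using Nat.strong_induction_on with
  | _ b ih =>
    intro hb
    have hsplit : ∑ ℓ ∈ range N, d ℓ * E b ℓ = ∑ ℓ ∈ range b, d ℓ * E b ℓ + d b := by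
      rw [← sum_subset (range_subset_range.2 hb), sum_range_succ, hE_self, mul_one]
      intro ℓ _ hℓ
      rw [hE_lt b ℓ (by simpa using hℓ), mul_zero]
    have hmem := sub_mem (hd b hb) <| sum_mem fun ℓ hℓ =>
      mul_mem (ih ℓ (mem_range.1 hℓ) (by have := mem_range.1 hℓ; omega)) (hE_mem b ℓ)
    rwa [hsplit, add_sub_cancel_left] at hmem

theorem Polynomial.Sequence.exists_eq_sum_range_C_mul {K : Type*} [Field K]
    (S : Polynomial.Sequence K) {f : K[X]} {n : ℕ} (hf : f.degree < n) :
    ∃ d : ℕ → K, f = ∑ i ∈ range n, C (d i) * S i := by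
  rw [← mem_degreeLT, ← S.span_degreeLT fun i _ => (leadingCoeff_ne_zero.2 (S.ne_zero i)).isUnit,
    Finsupp.mem_span_image_iff_linearCombination] at hf
  obtain ⟨l, hl, rfl⟩ := hf
  refine ⟨l, ?_⟩
  rw [Finsupp.linearCombination_apply, Finsupp.sum]
  refine (sum_subset (fun i hi => ?_) fun i _ hi => ?_).trans
    (sum_congr rfl fun i _ => smul_eq_C_mul _)
  · simpa using hl hi
  · simp [Finsupp.notMem_support_iff.1 hi]

theorem RatFunc.X_pow_sub_one_ne_zero {K : Type*} [Field K] {n : ℕ} (hn : 0 < n) :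
    (RatFunc.X : RatFunc K) ^ n - 1 ≠ 0 := by
  rw [← RatFunc.algebraMap_X, ← map_pow, ← map_one (algebraMap K[X] _), ← map_sub, ← C_1, Ne,
    map_eq_zero_iff _ (RatFunc.algebraMap_injective K)]
  exact X_pow_sub_C_ne_zero hn 1

local notation "q" => (RatFunc.X : RatFunc ℚ)

theorem degree_angleBinom (ℓ : ℕ) : (angleBinom ℓ).degree = ℓ := by
  have hq : q ≠ 0 := RatFunc.X_ne_zero
  rw [angleBinom, degree_prod, sum_congr rfl (g := fun _ => 1) fun i _ => ?_]
  · simp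
  rw [degree_C_mul (inv_ne_zero (RatFunc.X_pow_sub_one_ne_zero i.succ_pos)),
    degree_sub_eq_left_of_degree_lt] <;>
  rw [degree_C_mul_X (inv_ne_zero (pow_ne_zero i hq))]
  simp

theorem eval_angleBinom (ℓ : ℕ) (x : RatFunc ℚ) :
    (angleBinom ℓ).eval x =
      (∏ i ∈ range ℓ, (x / q ^ i - 1)) / ∏ i ∈ range ℓ, (q ^ (i + 1) - 1) := by
  rw [angleBinom, eval_prod, div_eq_mul_inv, ← prod_inv_distrib, ← prod_mul_distrib]
  refine prod_congr rfl fun i _ => ?_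
  simp only [eval_mul, eval_sub, eval_C, eval_X, eval_one]
  ring

theorem eval_angleBinom_succ_q_mul (ℓ : ℕ) (x : RatFunc ℚ) :
    (angleBinom (ℓ + 1)).eval (q * x) =
      (angleBinom ℓ).eval x + q ^ (ℓ + 1) * (angleBinom (ℓ + 1)).eval x := by
  have hq : q ≠ 0 := RatFunc.X_ne_zero
  have hnum : ∏ i ∈ range (ℓ + 1), (q * x / q ^ i - 1) =
      (q * x - 1) * ∏ i ∈ range ℓ, (x / q ^ i - 1) := by
    rw [prod_range_succ', pow_zero, div_one, mul_comm]
    congr 1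
    exact prod_congr rfl fun i _ => by rw [pow_succ', mul_div_mul_left _ _ hq]
  have hden (i : ℕ) : q ^ (i + 1) - 1 ≠ 0 := RatFunc.X_pow_sub_one_ne_zero i.succ_pos
  rw [eval_angleBinom, eval_angleBinom, eval_angleBinom, hnum,
    prod_range_succ (fun i => x / q ^ i - 1), prod_range_succ (fun i => q ^ (i + 1) - 1)]
  have h1 := prod_ne_zero_iff.2 fun i (_ : i ∈ range ℓ) => hden i
  have h2 := hden ℓ
  field_simp
  ring

noncomputable def intPolyHom : ℤ[X] →+* RatFunc ℚ :=
  (algebraMap ℚ[X] (RatFunc ℚ)).comp (mapRingHom (Int.castRingHom ℚ))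

theorem isIntPoly_iff_mem_range (r : RatFunc ℚ) : IsIntPoly r ↔ r ∈ intPolyHom.range :=
  exists_congr fun _ => eq_comm

theorem intPolyHom_X : intPolyHom X = q := by
  simp [intPolyHom]

noncomputable def gaussBinom : ℕ → ℕ → ℤ[X]
  | _, 0 => 1
  | 0, _ + 1 => 0
  | b + 1, ℓ + 1 => gaussBinom b ℓ + X ^ (ℓ + 1) * gaussBinom b (ℓ + 1)

theorem gaussBinom_eq_zero_of_lt : ∀ {b ℓ : ℕ}, b < ℓ → gaussBinom b ℓ = 0
  | 0, _ + 1, _ => rfl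
  | b + 1, ℓ + 1, h => by
    rw [gaussBinom, gaussBinom_eq_zero_of_lt (by omega : b < ℓ),
      gaussBinom_eq_zero_of_lt (by omega : b < ℓ + 1), mul_zero, add_zero]

theorem gaussBinom_self : ∀ b : ℕ, gaussBinom b b = 1
  | 0 => rfl
  | b + 1 => by
    rw [gaussBinom, gaussBinom_self b, gaussBinom_eq_zero_of_lt b.lt_succ_self, mul_zero, add_zero]

theorem eval_angleBinom_q_pow :
    ∀ b ℓ : ℕ, (angleBinom ℓ).eval (q ^ b) = intPolyHom (gaussBinom b ℓ)
  | b, 0 => by simp [angleBinom, gaussBinom]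
  | 0, ℓ + 1 => by
    rw [gaussBinom, map_zero, angleBinom, eval_prod]
    exact prod_eq_zero (mem_range.2 ℓ.succ_pos) (by simp)
  | b + 1, ℓ + 1 => by
    rw [pow_succ', eval_angleBinom_succ_q_mul, eval_angleBinom_q_pow b ℓ,
      eval_angleBinom_q_pow b (ℓ + 1), gaussBinom, map_add, map_mul, map_pow, intPolyHom_X]

/-- **Mahler-type expansion.**  If `f ∈ ℚ(q)[x]` satisfies `f(q^b) ∈ ℤ[q]` for
every nonnegative integer `b`, then there are polynomials `c_ℓ(q) ∈ ℤ[q]`, all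
but finitely many zero, with `f(x) = ∑_ℓ c_ℓ(q) ⟨x choose ℓ⟩_q`. -/
theorem mahler_type_expansion (f : Polynomial (RatFunc ℚ))
    (hf : ∀ b : ℕ, IsIntPoly (f.eval ((RatFunc.X : RatFunc ℚ) ^ b))) :
    ∃ (c : ℕ → Polynomial ℤ) (N : ℕ), (∀ ℓ, N ≤ ℓ → c ℓ = 0) ∧
      f = ∑ ℓ ∈ Finset.range N,
        Polynomial.C (algebraMap (Polynomial ℚ) (RatFunc ℚ)
          ((c ℓ).map (Int.castRingHom ℚ))) * angleBinom ℓ := by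
  set N := f.natDegree + 1
  obtain ⟨d, hd⟩ : ∃ d : ℕ → RatFunc ℚ, f = ∑ ℓ ∈ range N, C (d ℓ) * angleBinom ℓ :=
    (⟨angleBinom, degree_angleBinom⟩ : Polynomial.Sequence _).exists_eq_sum_range_C_mul
      (degree_le_natDegree.trans_lt (WithBot.coe_lt_coe.2 f.natDegree.lt_succ_self))
  have hd_int : ∀ ℓ < N, d ℓ ∈ intPolyHom.range := by
    refine mem_of_unitriangular_sum_mem intPolyHom.range
      (E := fun b ℓ => intPolyHom (gaussBinom b ℓ))
      (fun b ℓ h => by simp [gaussBinom_eq_zero_of_lt h]) (fun b => by simp [gaussBinom_self])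
      (fun b ℓ => ⟨_, rfl⟩) fun b _ => ?_
    have hfb := (isIntPoly_iff_mem_range _).1 (hf b)
    rw [hd, eval_finsetSum] at hfb
    simpa only [eval_mul, eval_C, eval_angleBinom_q_pow] using hfb
  choose c hc using hd_int
  refine ⟨fun ℓ => if h : ℓ < N then c ℓ h else 0, N, fun ℓ hℓ => dif_neg (by omega), ?_⟩
  refine hd.trans (sum_congr rfl fun ℓ hℓ => ?_)
  dsimp only
  rw [dif_pos (mem_range.1 hℓ)]
  exact congrArg (C · * _) (hc ℓ _).symm
end

section
/- For fixed nonnegative integers i ≥ 1 and m, there exists a polynomial p_{i,m}(b) in b of degree m+1 with leading coefficient 1/(i(m+1)) such that for all integers b ≥ i−1, p_{i,m}(b) equals the m-th derivative with respect to q of (∑_{j=0}^{b−i} q^j)/(∑_{j=0}^{i−1} q^j) evaluated at q = 1. -/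
open Finset Polynomial

/-!
Write the ratio as `(∑_{j<a} q^j) * g q` with `a = b + 1 - i` and `g = 1 / [i]_q`. By Leibniz,
its `m`-th derivative at `1` is `∑_k C(m,k) g^{(m-k)}(1) (∑_{j<a} j^{\underline k})`, and
`∑_{j<a} j^{\underline k} = a^{\underline{k+1}} / (k+1)` is a monic polynomial of degree `k + 1`
in `a`, hence in `b`. Only `k = m` reaches degree `m + 1`, with coefficient `g 1 / (m + 1)`.
-/

theorem Nat.succ_mul_sum_range_descFactorial (k a : ℕ) :
    (k + 1) * ∑ j ∈ range a, j.descFactorial k = a.descFactorial (k + 1) := by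
  induction a with
  | zero => simp
  | succ a ih =>
    rw [sum_range_succ, mul_add, ih, succ_descFactorial_succ, descFactorial_succ, ← add_mul]
    rcases le_or_gt k a with h | h
    · congr 1
      omega
    · simp [descFactorial_of_lt h]

section DescPochhammer

variable {R : Type*} [CommRing R] [IsDomain R]

theorem Polynomial.degree_descPochhammer (n : ℕ) : (descPochhammer R n).degree = n := by
  rw [degree_eq_natDegree (monic_descPochhammer R n).ne_zero, descPochhammer_natDegree]

theorem Polynomial.degree_sum_range_C_mul_descPochhammer_lt (c : ℕ → R) (m : ℕ) :
    (∑ k ∈ range m, C (c k) * descPochhammer R (k + 1)).degree < ↑(m + 1) := by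
  rw [← mem_degreeLT]
  refine Submodule.sum_mem _ fun k hk => mem_degreeLT.2 ?_
  calc (C (c k) * descPochhammer R (k + 1)).degree
      ≤ (C (c k)).degree + (descPochhammer R (k + 1)).degree := degree_mul_le _ _
    _ ≤ 0 + ↑(k + 1) := by rw [degree_descPochhammer]; gcongr; exact degree_C_le
    _ < ↑(m + 1) := by rw [zero_add]; exact_mod_cast Nat.succ_lt_succ (mem_range.1 hk)

variable {c : ℕ → R} {m : ℕ}

theorem Polynomial.degree_sum_range_C_mul_descPochhammer (hc : c m ≠ 0) :
    (∑ k ∈ range (m + 1), C (c k) * descPochhammer R (k + 1)).degree = ↑(m + 1) := by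
  rw [sum_range_succ, degree_add_eq_right_of_degree_lt] <;>
    rw [degree_C_mul hc, degree_descPochhammer]
  exact degree_sum_range_C_mul_descPochhammer_lt c m

theorem Polynomial.leadingCoeff_sum_range_C_mul_descPochhammer (hc : c m ≠ 0) :
    (∑ k ∈ range (m + 1), C (c k) * descPochhammer R (k + 1)).leadingCoeff = c m := by
  rw [sum_range_succ, leadingCoeff_add_of_degree_lt, leadingCoeff_mul, leadingCoeff_C,
    (monic_descPochhammer R _).leadingCoeff, mul_one]
  rw [degree_C_mul hc, degree_descPochhammer]
  exact degree_sum_range_C_mul_descPochhammer_lt c m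

end DescPochhammer

section GeomSum

variable {𝕜 : Type*} [NontriviallyNormedField 𝕜] [CharZero 𝕜]

theorem iteratedDeriv_geom_sum_one (a k : ℕ) :
    iteratedDeriv k (fun q : 𝕜 => ∑ j ∈ range a, q ^ j) 1 =
      a.descFactorial (k + 1) / (k + 1) := by
  rw [iteratedDeriv_fun_sum fun j _ => (contDiff_id.pow j).contDiffAt,
    eq_div_iff (Nat.cast_add_one_ne_zero k), ← Nat.succ_mul_sum_range_descFactorial]
  simp only [iteratedDeriv_pow, one_pow, mul_one]
  push_cast
  ring

noncomputable def geomSumMulDerivPoly (g : 𝕜 → 𝕜) (m : ℕ) : 𝕜[X] :=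
  ∑ k ∈ range (m + 1),
    C (m.choose k * iteratedDeriv (m - k) g 1 / (k + 1)) * descPochhammer 𝕜 (k + 1)

variable {g : 𝕜 → 𝕜} {m : ℕ}

theorem eval_geomSumMulDerivPoly (hg : ContDiffAt 𝕜 m g 1) (a : ℕ) :
    (geomSumMulDerivPoly g m).eval (a : 𝕜) =
      iteratedDeriv m (fun q => (∑ j ∈ range a, q ^ j) * g q) 1 := by
  rw [iteratedDeriv_fun_mul (ContDiff.contDiffAt (by fun_prop)) hg, geomSumMulDerivPoly,
    eval_finsetSum]
  refine sum_congr rfl fun k _ => ?_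
  rw [eval_mul, eval_C, descPochhammer_eval_eq_descFactorial, iteratedDeriv_geom_sum_one]
  ring

theorem degree_geomSumMulDerivPoly (hg : g 1 ≠ 0) :
    (geomSumMulDerivPoly g m).degree = ↑(m + 1) :=
  degree_sum_range_C_mul_descPochhammer (by simp [hg, Nat.cast_add_one_ne_zero])

theorem leadingCoeff_geomSumMulDerivPoly (hg : g 1 ≠ 0) :
    (geomSumMulDerivPoly g m).leadingCoeff = g 1 / (m + 1) := by
  rw [geomSumMulDerivPoly, leadingCoeff_sum_range_C_mul_descPochhammer
    (by simp [hg, Nat.cast_add_one_ne_zero])]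
  simp

end GeomSum

/-- For fixed integers `i ≥ 1` and `m ≥ 0` there is a polynomial `p_{i,m}(b)` of
degree `m+1` with leading coefficient `1/(i(m+1))` such that for all integers
`b ≥ i−1`, `p_{i,m}(b)` equals the `m`-th derivative with respect to `q` of
`(∑_{j=0}^{b−i} q^j)/(∑_{j=0}^{i−1} q^j)` evaluated at `q = 1`. -/
theorem qratio_derivative_polynomial (i m : ℕ) (hi : 1 ≤ i) :
    ∃ p : Polynomial ℝ, p.degree = (m + 1 : ℕ) ∧
      p.leadingCoeff = 1 / (i * (m + 1)) ∧
      ∀ b : ℕ, i - 1 ≤ b →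
        p.eval (b : ℝ) =
          iteratedDeriv m
            (fun q : ℝ => (∑ j ∈ Finset.range (b + 1 - i), q ^ j) /
              (∑ j ∈ Finset.range i, q ^ j)) 1 := by
  set D : ℝ → ℝ := fun q => ∑ j ∈ range i, q ^ j
  have hD : D 1 = i := by simp [D]
  have hD_ne : D 1 ≠ 0 := by rw [hD]; exact_mod_cast (by omega : i ≠ 0)
  have hDinv : ContDiffAt ℝ m (fun q => (D q)⁻¹) 1 :=
    (ContDiff.contDiffAt (by fun_prop)).inv hD_ne
  refine ⟨taylor (1 - i : ℝ) (geomSumMulDerivPoly (fun q => (D q)⁻¹) m), ?_, ?_, fun b hb => ?_⟩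
  · rw [degree_taylor, degree_geomSumMulDerivPoly (inv_ne_zero hD_ne)]
  · rw [leadingCoeff_taylor, leadingCoeff_geomSumMulDerivPoly (inv_ne_zero hD_ne), hD,
      div_mul_eq_div_div, one_div]
  · have hshift : (b : ℝ) + (1 - i) = ((b + 1 - i : ℕ) : ℝ) := by
      push_cast [Nat.cast_sub (show i ≤ b + 1 by omega)]
      ring
    simp only [taylor_eval, hshift, eval_geomSumMulDerivPoly hDinv, div_eq_mul_inv, D]
end
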